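/- (Corollary: joint characterization of IR ∩ IC for submodular retentions.) Suppose the menu's retentions are submodular, i.e. r_θ(l) is nonincreasing in θ for every l ∈ [0,L̄]. Then the menu (r_θ, p_θ)_{θ∈Θ} is both individually rational and incentive compatible if and only if all of the following hold: (1) for every θ ∈ Θ, p_θ = p_{θ̲} + ∫₀^{L̄} (1 − g_{θ̲}(F_{θ̲}(l))) r_{θ̲}(l) dl − ∫_{θ̲}^{θ} ∫₀^{L̄} D(s,l) r_s(l) dl ds − ∫₀^{L̄} (1 − g_θ(F_θ(l))) r_θ(l) dl; (2) p_{θ̲} ≤ ∫₀^{L̄} (1 − g_{θ̲}(F_{θ̲}(l))) (1 − r_{θ̲}(l)) dl; and (3) ∫_Θ V_θ(r_θ, p_θ) dμ ≥ 0. -/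

import Mathlib

open MeasureTheory

/-- The agent's Yaari dual utility: `U_θ(r, p) = -p - ∫₀^{L̄} (1 - g_θ(F_θ(l))) r(l) dl`. -/
noncomputable def Uag (g F : ℝ → ℝ → ℝ) (Lbar θ : ℝ) (rr : ℝ → ℝ) (pp : ℝ) : ℝ :=
  -pp - ∫ l in (0 : ℝ)..Lbar, (1 - g θ (F θ l)) * rr l

/-- The agent's no-insurance utility: `U_θ⁰ = -∫₀^{L̄} (1 - g_θ(F_θ(l))) dl`. -/
noncomputable def U0 (g F : ℝ → ℝ → ℝ) (Lbar θ : ℝ) : ℝ :=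
  -∫ l in (0 : ℝ)..Lbar, (1 - g θ (F θ l))

/-- The insurer's Yaari dual utility:
`V_θ(r, p) = p - ∫₀^{L̄} (1 - g^In(F_θ(l))) (1 - r(l)) dl`. -/
noncomputable def Vin (gIn : ℝ → ℝ) (F : ℝ → ℝ → ℝ) (Lbar θ : ℝ) (rr : ℝ → ℝ) (pp : ℝ) : ℝ :=
  pp - ∫ l in (0 : ℝ)..Lbar, (1 - gIn (F θ l)) * (1 - rr l)

open Set Filter Topology

/-! With `W t u = ∫ (1 - g_t(F_t)) r_u` and `K s u = ∫ D(s, ·) r_u`, the agent's utility is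
`U_t(r_u, p_u) = -p_u - W t u`, and the fundamental theorem of calculus in the type together with
Fubini gives `W y u - W x u = -∫_x^y K s u ds`. Since `D ≤ 0` and `r` is nonincreasing in the type,
`K s u` is nondecreasing in `u`.

IC squeezes the increment of `Π u = p_u + W u u` over `[x, y]` between `-∫_x^y K s y` and
`-∫_x^y K s x`, so `Π u + ∫_a^u K s s` moves by at most `C (y - x) (A x - A y)`, where
`A u = ∫ r_u` and `C` is the common Lipschitz constant (a bound for `|D|`); summing over a fine
partition shows it is constant, which is the envelope formula.
Conversely, the envelope formula and the monotonicity of `K` give IC, and IR of the lowest type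
propagates upward because `∫ D(s, ·) ≤ K s s`. -/

theorem abs_le_one_of_mem_Icc {x : ℝ} (hx : x ∈ Icc (0 : ℝ) 1) : |x| ≤ 1 :=
  abs_le.mpr ⟨by linarith [hx.1], hx.2⟩

theorem intervalIntegrable_of_abs_le {f : ℝ → ℝ} {a b M : ℝ} (hf : Measurable f)
    (hM : ∀ x ∈ uIcc a b, |f x| ≤ M) : IntervalIntegrable f volume a b :=
  (intervalIntegrable_const (c := M)).mono_fun' hf.aestronglyMeasurable <| by
    filter_upwards [ae_restrict_mem measurableSet_uIoc] with x hx
    simpa using hM x (uIoc_subset_uIcc hx)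

theorem Measurable.intervalIntegral_right {α : Type*} [MeasurableSpace α] {f : α → ℝ → ℝ}
    (hf : Measurable (Function.uncurry f))
    (a b : ℝ) : Measurable fun s => ∫ l in a..b, f s l := by
  simp only [intervalIntegral]
  exact (hf.stronglyMeasurable.integral_prod_right (ν := volume.restrict (Ioc a b))).measurable.sub
    (hf.stronglyMeasurable.integral_prod_right (ν := volume.restrict (Ioc b a))).measurable

theorem abs_le_of_hasDerivWithinAt_Icc_of_lipschitzOnWith {f : ℝ → ℝ} {C : NNReal}
    {a b x d : ℝ} (hab : a < b) (hx : x ∈ Icc a b) (hf : LipschitzOnWith C f (Icc a b))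
    (hd : HasDerivWithinAt f d (Icc a b) x) : |d| ≤ C := by
  have : (𝓝[Icc a b \ {x}] x).NeBot := by
    rcases hx.2.lt_or_eq with hxb | rfl
    · exact (left_nhdsWithin_Ioo_neBot hxb).mono <| nhdsWithin_mono _ fun y (hy : y ∈ Ioo x b) =>
        (mem_sdiff_singleton.mpr ⟨⟨hx.1.trans hy.1.le, hy.2.le⟩, hy.1.ne'⟩ :
          y ∈ Icc a b \ {x})
    · exact (right_nhdsWithin_Ioo_neBot hab).mono <| nhdsWithin_mono _ fun y (hy : y ∈ Ioo a x) =>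
        (mem_sdiff_singleton.mpr ⟨⟨hy.1.le, hy.2.le⟩, hy.2.ne⟩ : y ∈ Icc a x \ {x})
  refine le_of_tendsto (hasDerivWithinAt_iff_tendsto_slope.mp hd).abs ?_
  filter_upwards [self_mem_nhdsWithin] with y ⟨hy, hyx⟩
  rw [slope_def_field, abs_div, div_le_iff₀ (abs_pos.mpr (sub_ne_zero.mpr hyx))]
  simpa only [Real.dist_eq] using hf.dist_le_mul y hy x hx

theorem intervalIntegral.integral_eq_sub_of_hasDerivWithinAt_Icc {f f' : ℝ → ℝ} {a b : ℝ}
    (hab : a ≤ b) (hf : ∀ s ∈ Icc a b, HasDerivWithinAt f (f' s) (Icc a b) s)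
    (hint : IntervalIntegrable f' volume a b) : ∫ s in a..b, f' s = f b - f a :=
  integral_eq_sub_of_hasDeriv_right_of_le hab (fun s hs => (hf s hs).continuousWithinAt)
    (fun s hs => ((hf s (Ioo_subset_Icc_self hs)).hasDerivAt
      (Icc_mem_nhds hs.1 hs.2)).hasDerivWithinAt) hint

theorem intervalIntegral.integral_sub_mul_eq_integral_integral {f f' : ℝ → ℝ → ℝ} {ρ : ℝ → ℝ}
    {a b L C M : ℝ} (hab : a ≤ b) (hL : 0 ≤ L)
    (hf : ∀ l ∈ Icc 0 L, ∀ s ∈ Icc a b, HasDerivWithinAt (f · l) (f' s l) (Icc a b) s)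
    (hf'm : Measurable (Function.uncurry f')) (hf'C : ∀ s ∈ Icc a b, ∀ l ∈ Icc 0 L, |f' s l| ≤ C)
    (hρm : Measurable ρ) (hρM : ∀ l ∈ Icc 0 L, |ρ l| ≤ M) :
    ∫ l in 0..L, (f b l - f a l) * ρ l = ∫ s in a..b, ∫ l in 0..L, f' s l * ρ l := by
  have hftc : ∀ l ∈ uIcc 0 L, (f b l - f a l) * ρ l = ∫ s in a..b, f' s l * ρ l := by
    intro l hl
    rw [uIcc_of_le hL] at hl
    rw [intervalIntegral.integral_mul_const, integral_eq_sub_of_hasDerivWithinAt_Icc hab (hf l hl)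
      (intervalIntegrable_of_abs_le (hf'm.comp (measurable_id.prodMk measurable_const))
        fun s hs => hf'C s (uIcc_of_le hab ▸ hs) l hl)]
  have hprod : Integrable (Function.uncurry fun l s => f' s l * ρ l)
      ((volume.restrict (Ioc 0 L)).prod (volume.restrict (Ioc a b))) := by
    refine Integrable.of_bound ((hf'm.comp measurable_swap).mul
      (hρm.comp measurable_fst)).aestronglyMeasurable (C * M) ?_
    rw [Measure.prod_restrict]
    filter_upwards [ae_restrict_mem (measurableSet_Ioc.prod measurableSet_Ioc)] with x hx
    rw [Function.uncurry_apply_pair, Real.norm_eq_abs, abs_mul]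
    have hC := hf'C _ (Ioc_subset_Icc_self hx.2) _ (Ioc_subset_Icc_self hx.1)
    exact mul_le_mul hC (hρM _ (Ioc_subset_Icc_self hx.1)) (abs_nonneg _) ((abs_nonneg _).trans hC)
  rw [intervalIntegral.integral_congr hftc]
  simpa only [intervalIntegral.integral_of_le hab, intervalIntegral.integral_of_le hL] using
    integral_integral_swap hprod

theorem eq_of_abs_sub_le_mul_sub {Φ A : ℝ → ℝ} {a b : ℝ} (hab : a ≤ b)
    (h : ∀ x ∈ Icc a b, ∀ y ∈ Icc a b, x ≤ y → |Φ y - Φ x| ≤ (y - x) * (A x - A y)) :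
    Φ b = Φ a := by
  have hpart : ∀ n : ℕ, 0 < n → |Φ b - Φ a| ≤ (b - a) * (A a - A b) / n := by
    intro n hn
    have hn' : (0 : ℝ) < n := Nat.cast_pos.mpr hn
    set δ := (b - a) / n with hδ
    set t : ℕ → ℝ := fun i => a + i * δ
    have hδ0 : 0 ≤ δ := div_nonneg (sub_nonneg.mpr hab) hn'.le
    have ht0 : t 0 = a := by simp [t]
    have htn : t n = b := by simp only [t, δ]; field_simp; ring
    have hstep : ∀ i, t (i + 1) - t i = δ := fun i => by simp only [t]; push_cast; ring
    have hmem : ∀ i ≤ n, t i ∈ Icc a b := fun i hi => by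
      refine ⟨le_add_of_nonneg_right (by positivity), ?_⟩
      rw [← htn]
      exact add_le_add_right (mul_le_mul_of_nonneg_right (Nat.cast_le.mpr hi) hδ0) a
    calc |Φ b - Φ a| = |∑ i ∈ Finset.range n, (Φ (t (i + 1)) - Φ (t i))| := by
          rw [Finset.sum_range_sub (fun i => Φ (t i)), htn, ht0]
      _ ≤ ∑ i ∈ Finset.range n, |Φ (t (i + 1)) - Φ (t i)| := Finset.abs_sum_le_sum_abs _ _
      _ ≤ ∑ i ∈ Finset.range n, δ * (A (t i) - A (t (i + 1))) := by
          refine Finset.sum_le_sum fun i hi => ?_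
          have hi := Finset.mem_range.mp hi
          rw [← hstep i]
          exact h _ (hmem i hi.le) _ (hmem (i + 1) hi) (sub_nonneg.mp ((hstep i).symm ▸ hδ0))
      _ = (b - a) * (A a - A b) / n := by
          rw [← Finset.mul_sum, Finset.sum_range_sub' (fun i => A (t i)), htn, ht0, hδ]
          ring
  have hlim : Tendsto (fun n : ℕ => (b - a) * (A a - A b) / n) atTop (𝓝 0) :=
    tendsto_const_div_atTop_nhds_zero_nat _
  have : |Φ b - Φ a| ≤ 0 :=
    ge_of_tendsto hlim (eventually_atTop.mpr ⟨1, fun n hn => hpart n hn⟩)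
  exact sub_eq_zero.mp (abs_nonpos_iff.mp this)

section Screening

variable {a b : ℝ} {p T K₁ A : ℝ → ℝ} {W K : ℝ → ℝ → ℝ}

/-- `W t u` is the cost to type `t` of the contract meant for type `u`, `-K s u` its derivative
in the type at `s`; monotonicity of `K s` is the single-crossing condition. -/
structure IsSubmodularCost (a b : ℝ) (W K : ℝ → ℝ → ℝ) : Prop where
  sub_eq_neg_integral : ∀ u ∈ Icc a b, ∀ x ∈ Icc a b, ∀ y ∈ Icc a b, x ≤ y →
    W y u - W x u = -∫ s in x..y, K s u
  monotoneOn : ∀ s ∈ Icc a b, MonotoneOn (K s) (Icc a b)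
  intervalIntegrable : ∀ u ∈ Icc a b, ∀ x ∈ Icc a b, ∀ y ∈ Icc a b,
    IntervalIntegrable (K · u) volume x y
  intervalIntegrable_diag : ∀ x ∈ Icc a b, ∀ y ∈ Icc a b,
    IntervalIntegrable (fun s => K s s) volume x y

namespace IsSubmodularCost

theorem abs_sub_add_integral_le (hWK : IsSubmodularCost a b W K)
    (hIC : ∀ t ∈ Icc a b, ∀ u ∈ Icc a b, -p u - W t u ≤ -p t - W t t)
    {x y : ℝ} (hx : x ∈ Icc a b) (hy : y ∈ Icc a b) (hxy : x ≤ y) :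
    |(p y + W y y - p x - W x x) + ∫ s in x..y, K s s| ≤ ∫ s in x..y, (K s y - K s x) := by
  have hsub : Icc x y ⊆ Icc a b := Icc_subset_Icc hx.1 hy.2
  have hlow : ∫ s in x..y, K s x ≤ ∫ s in x..y, K s s :=
    intervalIntegral.integral_mono_on hxy (hWK.intervalIntegrable x hx x hx y hy)
      (hWK.intervalIntegrable_diag x hx y hy) fun s hs =>
        hWK.monotoneOn s (hsub hs) hx (hsub hs) hs.1
  have hupp : ∫ s in x..y, K s s ≤ ∫ s in x..y, K s y :=
    intervalIntegral.integral_mono_on hxy (hWK.intervalIntegrable_diag x hx y hy)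
      (hWK.intervalIntegrable y hy x hx y hy) fun s hs =>
        hWK.monotoneOn s (hsub hs) (hsub hs) hy hs.2
  rw [intervalIntegral.integral_sub (hWK.intervalIntegrable y hy x hx y hy)
    (hWK.intervalIntegrable x hx x hx y hy), abs_le]
  have hWx := hWK.sub_eq_neg_integral x hx x hx y hy hxy
  have hWy := hWK.sub_eq_neg_integral y hy x hx y hy hxy
  have hICxy := hIC x hx y hy
  have hICyx := hIC y hy x hx
  constructor <;> linarith

theorem envelope_of_incentiveCompatible (hWK : IsSubmodularCost a b W K)
    (hKA : ∀ s ∈ Icc a b, ∀ x ∈ Icc a b, ∀ y ∈ Icc a b, x ≤ y → K s y - K s x ≤ A x - A y)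
    (hIC : ∀ t ∈ Icc a b, ∀ u ∈ Icc a b, -p u - W t u ≤ -p t - W t t)
    {u : ℝ} (hu : u ∈ Icc a b) :
    p u = p a + W a a - (∫ s in a..u, K s s) - W u u := by
  have ha : a ∈ Icc a b := ⟨le_rfl, hu.1.trans hu.2⟩
  have hconst := eq_of_abs_sub_le_mul_sub (Φ := fun v => p v + W v v + ∫ s in a..v, K s s)
    (A := A) hu.1 fun x hx y hy hxy => by
      have hx' : x ∈ Icc a b := ⟨hx.1, hx.2.trans hu.2⟩
      have hy' : y ∈ Icc a b := ⟨hy.1, hy.2.trans hu.2⟩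
      have hgap : ∫ s in x..y, (K s y - K s x) ≤ (y - x) * (A x - A y) := by
        simpa only [intervalIntegral.integral_const, smul_eq_mul] using
          intervalIntegral.integral_mono_on hxy ((hWK.intervalIntegrable y hy' x hx' y hy').sub
            (hWK.intervalIntegrable x hx' x hx' y hy')) intervalIntegrable_const
            fun s hs => hKA s ⟨hx'.1.trans hs.1, hs.2.trans hy'.2⟩ x hx' y hy' hxy
      have hsplit := intervalIntegral.integral_interval_sub_left
        (hWK.intervalIntegrable_diag a ha y hy') (hWK.intervalIntegrable_diag a ha x hx')
      calc _ = |(p y + W y y - p x - W x x) + ∫ s in x..y, K s s| := by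
            rw [← hsplit]; ring_nf
        _ ≤ _ := (hWK.abs_sub_add_integral_le hIC hx' hy' hxy).trans hgap
  simp only [intervalIntegral.integral_same, add_zero] at hconst
  linarith

theorem incentiveCompatible_of_envelope (hWK : IsSubmodularCost a b W K) (ha : a ∈ Icc a b)
    (henv : ∀ u ∈ Icc a b, p u = p a + W a a - (∫ s in a..u, K s s) - W u u) :
    ∀ t ∈ Icc a b, ∀ u ∈ Icc a b, -p u - W t u ≤ -p t - W t t := by
  intro t ht u hu
  have ht' := henv t ht
  have hu' := henv u hu
  rcases le_total u t with hut | htu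
  · have hsub : Icc u t ⊆ Icc a b := Icc_subset_Icc hu.1 ht.2
    have hsplit := intervalIntegral.integral_interval_sub_left
      (hWK.intervalIntegrable_diag a ha t ht) (hWK.intervalIntegrable_diag a ha u hu)
    have hmono : ∫ s in u..t, K s u ≤ ∫ s in u..t, K s s :=
      intervalIntegral.integral_mono_on hut (hWK.intervalIntegrable u hu u hu t ht)
        (hWK.intervalIntegrable_diag u hu t ht) fun s hs =>
          hWK.monotoneOn s (hsub hs) hu (hsub hs) hs.1
    have hW := hWK.sub_eq_neg_integral u hu u hu t ht hut
    linarith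
  · have hsub : Icc t u ⊆ Icc a b := Icc_subset_Icc ht.1 hu.2
    have hsplit := intervalIntegral.integral_interval_sub_left
      (hWK.intervalIntegrable_diag a ha u hu) (hWK.intervalIntegrable_diag a ha t ht)
    have hmono : ∫ s in t..u, K s s ≤ ∫ s in t..u, K s u :=
      intervalIntegral.integral_mono_on htu (hWK.intervalIntegrable_diag t ht u hu)
        (hWK.intervalIntegrable u hu t ht u hu) fun s hs =>
          hWK.monotoneOn s (hsub hs) (hsub hs) hu hs.2
    have hW := hWK.sub_eq_neg_integral u hu t ht u hu htu
    linarith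

theorem individuallyRational_of_envelope (hWK : IsSubmodularCost a b W K)
    (hT : ∀ u ∈ Icc a b, T u - T a = -∫ s in a..u, K₁ s) (hK₁ : ∀ s ∈ Icc a b, K₁ s ≤ K s s)
    (hK₁i : ∀ u ∈ Icc a b, IntervalIntegrable K₁ volume a u) (ha : a ∈ Icc a b)
    (henv : ∀ u ∈ Icc a b, p u = p a + W a a - (∫ s in a..u, K s s) - W u u)
    (hlow : p a ≤ T a - W a a) : ∀ u ∈ Icc a b, -T u ≤ -p u - W u u := by
  intro u hu
  have hmono : ∫ s in a..u, K₁ s ≤ ∫ s in a..u, K s s :=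
    intervalIntegral.integral_mono_on hu.1 (hK₁i u hu) (hWK.intervalIntegrable_diag a ha u hu)
      fun s hs => hK₁ s ⟨hs.1, hs.2.trans hu.2⟩
  have henvu := henv u hu
  have hTu := hT u hu
  linarith

theorem individuallyRational_and_incentiveCompatible_iff (hWK : IsSubmodularCost a b W K)
    (hab : a ≤ b)
    (hKA : ∀ s ∈ Icc a b, ∀ x ∈ Icc a b, ∀ y ∈ Icc a b, x ≤ y → K s y - K s x ≤ A x - A y)
    (hT : ∀ u ∈ Icc a b, T u - T a = -∫ s in a..u, K₁ s) (hK₁ : ∀ s ∈ Icc a b, K₁ s ≤ K s s)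
    (hK₁i : ∀ u ∈ Icc a b, IntervalIntegrable K₁ volume a u) :
    ((∀ u ∈ Icc a b, -T u ≤ -p u - W u u) ∧
        ∀ t ∈ Icc a b, ∀ u ∈ Icc a b, -p u - W t u ≤ -p t - W t t) ↔
      (∀ u ∈ Icc a b, p u = p a + W a a - (∫ s in a..u, K s s) - W u u) ∧
        p a ≤ T a - W a a := by
  have ha : a ∈ Icc a b := ⟨le_rfl, hab⟩
  refine ⟨fun ⟨hIR, hIC⟩ => ⟨fun u hu => hWK.envelope_of_incentiveCompatible hKA hIC hu, ?_⟩,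
    fun ⟨henv, hlow⟩ => ⟨hWK.individuallyRational_of_envelope hT hK₁ hK₁i ha henv hlow,
      hWK.incentiveCompatible_of_envelope ha henv⟩⟩
  linarith [hIR a ha]

end IsSubmodularCost

end Screening

section InsuranceModel

variable {a b L C : ℝ} {h D r : ℝ → ℝ → ℝ}

theorem intervalIntegrable_mul_of_abs_le_one (hL : 0 ≤ L) {φ ρ : ℝ → ℝ} (hφm : Measurable φ)
    (hφ : ∀ l ∈ Icc 0 L, |φ l| ≤ C) (hρm : Measurable ρ) (hρ : ∀ l ∈ Icc 0 L, |ρ l| ≤ 1) :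
    IntervalIntegrable (fun l => φ l * ρ l) volume 0 L :=
  intervalIntegrable_of_abs_le (hφm.mul hρm) fun l hl => by
    rw [uIcc_of_le hL] at hl
    rw [abs_mul]
    exact (mul_le_of_le_one_right (abs_nonneg _) (hρ l hl)).trans (hφ l hl)

theorem intervalIntegrable_one_sub_mul (hL : 0 ≤ L) (hhm : Measurable (Function.uncurry h))
    (hh : ∀ t ∈ Icc a b, ∀ l ∈ Icc 0 L, h t l ∈ Icc 0 1) {ρ : ℝ → ℝ} (hρm : Measurable ρ)
    (hρ : ∀ l ∈ Icc 0 L, |ρ l| ≤ 1) {t : ℝ} (ht : t ∈ Icc a b) :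
    IntervalIntegrable (fun l => (1 - h t l) * ρ l) volume 0 L :=
  intervalIntegrable_mul_of_abs_le_one hL (measurable_const.sub hhm.of_uncurry_left)
    (fun l hl => abs_le_one_of_mem_Icc ⟨sub_nonneg.mpr (hh t ht l hl).2,
      sub_le_self _ (hh t ht l hl).1⟩) hρm hρ

theorem integral_one_sub_mul_one_sub (hL : 0 ≤ L) (hhm : Measurable (Function.uncurry h))
    (hh : ∀ t ∈ Icc a b, ∀ l ∈ Icc 0 L, h t l ∈ Icc 0 1) {ρ : ℝ → ℝ} (hρm : Measurable ρ)
    (hρ : ∀ l ∈ Icc 0 L, |ρ l| ≤ 1) {t : ℝ} (ht : t ∈ Icc a b) :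
    ∫ l in 0..L, (1 - h t l) * (1 - ρ l) =
      (∫ l in 0..L, (1 - h t l)) - ∫ l in 0..L, (1 - h t l) * ρ l := by
  have hone : IntervalIntegrable (fun l => 1 - h t l) volume 0 L := by
    simpa only [mul_one] using
      intervalIntegrable_one_sub_mul hL hhm hh measurable_const (fun _ _ => abs_one.le) ht
  rw [← intervalIntegral.integral_sub hone (intervalIntegrable_one_sub_mul hL hhm hh hρm hρ ht)]
  simp only [mul_one_sub]

theorem integral_one_sub_mul_sub_integral_one_sub_mul (hL : 0 ≤ L)
    (hhm : Measurable (Function.uncurry h)) (hh : ∀ t ∈ Icc a b, ∀ l ∈ Icc 0 L, h t l ∈ Icc 0 1)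
    (hD : ∀ l ∈ Icc 0 L, ∀ s ∈ Icc a b, HasDerivWithinAt (h · l) (D s l) (Icc a b) s)
    (hDm : Measurable (Function.uncurry D)) (hDC : ∀ s ∈ Icc a b, ∀ l ∈ Icc 0 L, |D s l| ≤ C)
    {ρ : ℝ → ℝ} (hρm : Measurable ρ) (hρ : ∀ l ∈ Icc 0 L, |ρ l| ≤ 1)
    {x y : ℝ} (hx : x ∈ Icc a b) (hy : y ∈ Icc a b) (hxy : x ≤ y) :
    (∫ l in 0..L, (1 - h y l) * ρ l) - (∫ l in 0..L, (1 - h x l) * ρ l) =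
      -∫ s in x..y, ∫ l in 0..L, D s l * ρ l := by
  have hsub : Icc x y ⊆ Icc a b := Icc_subset_Icc hx.1 hy.2
  rw [← intervalIntegral.integral_sub (intervalIntegrable_one_sub_mul hL hhm hh hρm hρ hy)
      (intervalIntegrable_one_sub_mul hL hhm hh hρm hρ hx),
    ← intervalIntegral.integral_sub_mul_eq_integral_integral hxy hL
      (fun l hl s hs => (hD l hl s (hsub hs)).mono hsub) hDm (fun s hs => hDC s (hsub hs)) hρm hρ,
    ← intervalIntegral.integral_neg]
  congr 1
  ext l
  ring

theorem intervalIntegrable_integral_mul (hL : 0 ≤ L) (hDm : Measurable (Function.uncurry D))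
    (hDC : ∀ s ∈ Icc a b, ∀ l ∈ Icc 0 L, |D s l| ≤ C) {ρ : ℝ → ℝ → ℝ}
    (hρm : Measurable (Function.uncurry ρ)) (hρ : ∀ s ∈ Icc a b, ∀ l ∈ Icc 0 L, |ρ s l| ≤ 1)
    {x y : ℝ} (hx : x ∈ Icc a b) (hy : y ∈ Icc a b) :
    IntervalIntegrable (fun s => ∫ l in 0..L, D s l * ρ s l) volume x y := by
  refine intervalIntegrable_of_abs_le (M := C * L)
    (Measurable.intervalIntegral_right (f := fun s l => D s l * ρ s l) (hDm.mul hρm) 0 L)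
    fun s hs => ?_
  have hs : s ∈ Icc a b := uIcc_subset_Icc hx hy hs
  have hbound := intervalIntegral.norm_integral_le_of_norm_le_const (C := C) fun l hl => by
    rw [uIoc_of_le hL] at hl
    rw [Real.norm_eq_abs, abs_mul]
    exact (mul_le_of_le_one_right (abs_nonneg _) (hρ s hs l (Ioc_subset_Icc_self hl))).trans
      (hDC s hs l (Ioc_subset_Icc_self hl))
  rwa [Real.norm_eq_abs, sub_zero, abs_of_nonneg hL] at hbound

theorem monotoneOn_integral_mul (hL : 0 ≤ L)
    (hDm : Measurable (Function.uncurry D)) (hDC : ∀ s ∈ Icc a b, ∀ l ∈ Icc 0 L, |D s l| ≤ C)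
    (hD0 : ∀ s ∈ Icc a b, ∀ l ∈ Icc 0 L, D s l ≤ 0)
    (hrm : Measurable (Function.uncurry r)) (hr : ∀ t ∈ Icc a b, ∀ l ∈ Icc 0 L, r t l ∈ Icc 0 1)
    (hsub : ∀ l ∈ Icc 0 L, ∀ θ₁ ∈ Icc a b, ∀ θ₂ ∈ Icc a b, θ₁ ≤ θ₂ → r θ₂ l ≤ r θ₁ l)
    {s : ℝ} (hs : s ∈ Icc a b) :
    MonotoneOn (fun u => ∫ l in 0..L, D s l * r u l) (Icc a b) := fun x hx y hy hxy => by
  have hint : ∀ u ∈ Icc a b, IntervalIntegrable (fun l => D s l * r u l) volume 0 L :=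
    fun u hu => intervalIntegrable_mul_of_abs_le_one hL hDm.of_uncurry_left (hDC s hs)
      hrm.of_uncurry_left fun l hl => abs_le_one_of_mem_Icc (hr u hu l hl)
  exact intervalIntegral.integral_mono_on hL (hint x hx) (hint y hy) fun l hl =>
    mul_le_mul_of_nonpos_left (hsub l hl x hx y hy hxy) (hD0 s hs l hl)

theorem integral_mul_sub_integral_mul_le (hL : 0 ≤ L)
    (hDm : Measurable (Function.uncurry D)) (hDC : ∀ s ∈ Icc a b, ∀ l ∈ Icc 0 L, |D s l| ≤ C)
    (hrm : Measurable (Function.uncurry r)) (hr : ∀ t ∈ Icc a b, ∀ l ∈ Icc 0 L, r t l ∈ Icc 0 1)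
    (hsub : ∀ l ∈ Icc 0 L, ∀ θ₁ ∈ Icc a b, ∀ θ₂ ∈ Icc a b, θ₁ ≤ θ₂ → r θ₂ l ≤ r θ₁ l)
    {s x y : ℝ} (hs : s ∈ Icc a b) (hx : x ∈ Icc a b) (hy : y ∈ Icc a b) (hxy : x ≤ y) :
    (∫ l in 0..L, D s l * r y l) - (∫ l in 0..L, D s l * r x l) ≤
      C * (∫ l in 0..L, r x l) - C * ∫ l in 0..L, r y l := by
  have hr1 : ∀ u ∈ Icc a b, ∀ l ∈ Icc 0 L, |r u l| ≤ 1 := fun u hu l hl =>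
    abs_le_one_of_mem_Icc (hr u hu l hl)
  have hDr : ∀ u ∈ Icc a b, IntervalIntegrable (fun l => D s l * r u l) volume 0 L :=
    fun u hu => intervalIntegrable_mul_of_abs_le_one hL hDm.of_uncurry_left (hDC s hs)
      hrm.of_uncurry_left (hr1 u hu)
  have hrint : ∀ u ∈ Icc a b, IntervalIntegrable (r u) volume 0 L := fun u hu =>
    intervalIntegrable_of_abs_le hrm.of_uncurry_left fun l hl => hr1 u hu l (uIcc_of_le hL ▸ hl)
  rw [← intervalIntegral.integral_sub (hDr y hy) (hDr x hx), ← intervalIntegral.integral_const_mul,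
    ← intervalIntegral.integral_const_mul, ← intervalIntegral.integral_sub
      ((hrint x hx).const_mul C) ((hrint y hy).const_mul C)]
  refine intervalIntegral.integral_mono_on hL ((hDr y hy).sub (hDr x hx))
    (((hrint x hx).const_mul C).sub ((hrint y hy).const_mul C)) fun l hl => ?_
  have hD := neg_le_of_abs_le (hDC s hs l hl)
  have hrl := sub_nonneg.mpr (hsub l hl x hx y hy hxy)
  nlinarith

theorem integral_le_integral_mul (hL : 0 ≤ L)
    (hDm : Measurable (Function.uncurry D)) (hDC : ∀ s ∈ Icc a b, ∀ l ∈ Icc 0 L, |D s l| ≤ C)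
    (hD0 : ∀ s ∈ Icc a b, ∀ l ∈ Icc 0 L, D s l ≤ 0)
    (hrm : Measurable (Function.uncurry r)) (hr : ∀ t ∈ Icc a b, ∀ l ∈ Icc 0 L, r t l ∈ Icc 0 1)
    {s : ℝ} (hs : s ∈ Icc a b) :
    ∫ l in 0..L, D s l ≤ ∫ l in 0..L, D s l * r s l := by
  refine intervalIntegral.integral_mono_on hL
    (intervalIntegrable_of_abs_le hDm.of_uncurry_left fun l hl => hDC s hs l (uIcc_of_le hL ▸ hl))
    (intervalIntegrable_mul_of_abs_le_one hL hDm.of_uncurry_left (hDC s hs) hrm.of_uncurry_left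
      fun l hl => abs_le_one_of_mem_Icc (hr s hs l hl)) fun l hl => ?_
  have hDl := hD0 s hs l hl
  have hrl := (hr s hs l hl).2
  nlinarith

theorem isSubmodularCost_integral (hL : 0 ≤ L)
    (hhm : Measurable (Function.uncurry h)) (hh : ∀ t ∈ Icc a b, ∀ l ∈ Icc 0 L, h t l ∈ Icc 0 1)
    (hD : ∀ l ∈ Icc 0 L, ∀ s ∈ Icc a b, HasDerivWithinAt (h · l) (D s l) (Icc a b) s)
    (hDm : Measurable (Function.uncurry D)) (hDC : ∀ s ∈ Icc a b, ∀ l ∈ Icc 0 L, |D s l| ≤ C)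
    (hD0 : ∀ s ∈ Icc a b, ∀ l ∈ Icc 0 L, D s l ≤ 0)
    (hrm : Measurable (Function.uncurry r)) (hr : ∀ t ∈ Icc a b, ∀ l ∈ Icc 0 L, r t l ∈ Icc 0 1)
    (hsub : ∀ l ∈ Icc 0 L, ∀ θ₁ ∈ Icc a b, ∀ θ₂ ∈ Icc a b, θ₁ ≤ θ₂ → r θ₂ l ≤ r θ₁ l) :
    IsSubmodularCost a b (fun t u => ∫ l in 0..L, (1 - h t l) * r u l)
      (fun s u => ∫ l in 0..L, D s l * r u l) where
  sub_eq_neg_integral _u hu _x hx _y hy hxy :=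
    integral_one_sub_mul_sub_integral_one_sub_mul hL hhm hh hD hDm hDC hrm.of_uncurry_left
      (fun l hl => abs_le_one_of_mem_Icc (hr _ hu l hl)) hx hy hxy
  monotoneOn _s hs := monotoneOn_integral_mul hL hDm hDC hD0 hrm hr hsub hs
  intervalIntegrable u hu _x hx _y hy := intervalIntegrable_integral_mul (ρ := fun _ l => r u l)
    hL hDm hDC (hrm.comp (measurable_const.prodMk measurable_snd))
    (fun _ _ l hl => abs_le_one_of_mem_Icc (hr u hu l hl)) hx hy
  intervalIntegrable_diag _x hx _y hy := intervalIntegrable_integral_mul hL hDm hDC hrm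
    (fun s hs l hl => abs_le_one_of_mem_Icc (hr s hs l hl)) hx hy

end InsuranceModel

theorem IR_and_IC_characterization_of_submodular_general
    (θlow θhigh Lbar : ℝ) (hθ : θlow < θhigh) (hL : 0 < Lbar)
    (g : ℝ → ℝ → ℝ) (gIn : ℝ → ℝ) (F : ℝ → ℝ → ℝ)
    (hg_range : ∀ θ ∈ Set.Icc θlow θhigh, ∀ t ∈ Set.Icc (0 : ℝ) 1,
      g θ t ∈ Set.Icc (0 : ℝ) 1)
    (hF_range : ∀ θ ∈ Set.Icc θlow θhigh, ∀ l ∈ Set.Icc (0 : ℝ) Lbar,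
      F θ l ∈ Set.Icc (0 : ℝ) 1)
    (hgF_meas : Measurable fun x : ℝ × ℝ => g x.1 (F x.1 x.2))
    (r : ℝ → ℝ → ℝ) (p : ℝ → ℝ)
    (hr_meas : Measurable (Function.uncurry r))
    (hr_range : ∀ θ ∈ Set.Icc θlow θhigh, ∀ l ∈ Set.Icc (0 : ℝ) Lbar,
      r θ l ∈ Set.Icc (0 : ℝ) 1)
    (q : ℝ → ℝ)
    (D : ℝ → ℝ → ℝ)
    (hD : ∀ l ∈ Set.Icc (0 : ℝ) Lbar, ∀ s ∈ Set.Icc θlow θhigh,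
      HasDerivWithinAt (fun t => g t (F t l)) (D s l) (Set.Icc θlow θhigh) s)
    (hLip : ∃ C : NNReal, ∀ l ∈ Set.Icc (0 : ℝ) Lbar,
      LipschitzOnWith C (fun s => g s (F s l)) (Set.Icc θlow θhigh))
    (hD_meas : Measurable (Function.uncurry D))
    (hD_nonpos : ∀ s ∈ Set.Icc θlow θhigh, ∀ l ∈ Set.Icc (0 : ℝ) Lbar, D s l ≤ 0)
    -- submodularity: `r_θ(l)` is nonincreasing in `θ` for every `l`
    (hsub : ∀ l ∈ Set.Icc (0 : ℝ) Lbar, ∀ θ₁ ∈ Set.Icc θlow θhigh,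
      ∀ θ₂ ∈ Set.Icc θlow θhigh, θ₁ ≤ θ₂ → r θ₂ l ≤ r θ₁ l) :
    ((∀ θ ∈ Set.Icc θlow θhigh, U0 g F Lbar θ ≤ Uag g F Lbar θ (r θ) (p θ)) ∧
        (0 ≤ ∫ θ in θlow..θhigh, Vin gIn F Lbar θ (r θ) (p θ) * q θ) ∧
        (∀ θ ∈ Set.Icc θlow θhigh, ∀ θ' ∈ Set.Icc θlow θhigh,
          Uag g F Lbar θ (r θ') (p θ') ≤ Uag g F Lbar θ (r θ) (p θ))) ↔
      ((∀ θ ∈ Set.Icc θlow θhigh,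
          p θ = p θlow + (∫ l in (0 : ℝ)..Lbar, (1 - g θlow (F θlow l)) * r θlow l)
            - (∫ s in θlow..θ, ∫ l in (0 : ℝ)..Lbar, D s l * r s l)
            - ∫ l in (0 : ℝ)..Lbar, (1 - g θ (F θ l)) * r θ l) ∧
        (p θlow ≤ ∫ l in (0 : ℝ)..Lbar, (1 - g θlow (F θlow l)) * (1 - r θlow l)) ∧
        (0 ≤ ∫ θ in θlow..θhigh, Vin gIn F Lbar θ (r θ) (p θ) * q θ)) := by
  obtain ⟨C, hC⟩ := hLip
  have hDC : ∀ s ∈ Icc θlow θhigh, ∀ l ∈ Icc 0 Lbar, |D s l| ≤ C := fun s hs l hl =>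
    abs_le_of_hasDerivWithinAt_Icc_of_lipschitzOnWith hθ hs (hC l hl) (hD l hl s hs)
  have hgFm : Measurable (Function.uncurry fun t l => g t (F t l)) := hgF_meas
  have hgF : ∀ t ∈ Icc θlow θhigh, ∀ l ∈ Icc 0 Lbar, g t (F t l) ∈ Icc 0 1 := fun t ht l hl =>
    hg_range t ht _ (hF_range t ht l hl)
  have hθlow : θlow ∈ Icc θlow θhigh := ⟨le_rfl, hθ.le⟩
  have hT : ∀ u ∈ Icc θlow θhigh, (∫ l in 0..Lbar, (1 - g u (F u l))) -
      (∫ l in 0..Lbar, (1 - g θlow (F θlow l))) = -∫ s in θlow..u, ∫ l in 0..Lbar, D s l :=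
    fun u hu => by
      simpa only [mul_one] using integral_one_sub_mul_sub_integral_one_sub_mul
        hL.le hgFm hgF hD hD_meas hDC measurable_const (fun _ _ => abs_one.le) hθlow hu hu.1
  have hK₁ : ∀ u ∈ Icc θlow θhigh,
      IntervalIntegrable (fun s => ∫ l in 0..Lbar, D s l) volume θlow u :=
    fun u hu => by
      simpa only [mul_one] using intervalIntegrable_integral_mul (ρ := fun _ _ => 1)
        hL.le hD_meas hDC measurable_const (fun _ _ _ _ => abs_one.le) hθlow hu
  have key := (isSubmodularCost_integral hL.le hgFm hgF hD hD_meas hDC hD_nonpos hr_meas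
    hr_range hsub).individuallyRational_and_incentiveCompatible_iff (p := p) hθ.le
    (fun s hs x hx y hy hxy =>
      integral_mul_sub_integral_mul_le hL.le hD_meas hDC hr_meas hr_range hsub hs hx hy hxy) hT
    (fun s hs => integral_le_integral_mul hL.le hD_meas hDC hD_nonpos hr_meas hr_range hs) hK₁
  rw [integral_one_sub_mul_one_sub hL.le hgFm hgF hr_meas.of_uncurry_left
    (fun l hl => abs_le_one_of_mem_Icc (hr_range θlow hθlow l hl)) hθlow]
  exact ⟨fun ⟨hIR, hV, hIC⟩ => ⟨(key.1 ⟨hIR, hIC⟩).1, (key.1 ⟨hIR, hIC⟩).2, hV⟩,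
    fun ⟨henv, hlow, hV⟩ => ⟨(key.2 ⟨henv, hlow⟩).1, hV, (key.2 ⟨henv, hlow⟩).2⟩⟩

/-- **Joint characterization of IR ∩ IC for submodular retentions.** With submodular
retentions, the menu is individually rational and incentive compatible iff the premia
satisfy the envelope formula (★), the lowest-type premium does not exceed its IR bound, and
the insurer's aggregate utility is nonnegative. -/
theorem IR_and_IC_characterization_of_submodular
    (θlow θhigh Lbar : ℝ) (hθ : θlow < θhigh) (hL : 0 < Lbar)
    (g : ℝ → ℝ → ℝ) (gIn : ℝ → ℝ) (F : ℝ → ℝ → ℝ)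
    (hg_mono : ∀ θ ∈ Set.Icc θlow θhigh, MonotoneOn (g θ) (Set.Icc (0 : ℝ) 1))
    (hg0 : ∀ θ ∈ Set.Icc θlow θhigh, g θ 0 = 0)
    (hg1 : ∀ θ ∈ Set.Icc θlow θhigh, g θ 1 = 1)
    (hg_range : ∀ θ ∈ Set.Icc θlow θhigh, ∀ t ∈ Set.Icc (0 : ℝ) 1,
      g θ t ∈ Set.Icc (0 : ℝ) 1)
    (hgIn_mono : MonotoneOn gIn (Set.Icc (0 : ℝ) 1))
    (hgIn0 : gIn 0 = 0) (hgIn1 : gIn 1 = 1)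
    (hgIn_range : ∀ t ∈ Set.Icc (0 : ℝ) 1, gIn t ∈ Set.Icc (0 : ℝ) 1)
    (hF_range : ∀ θ ∈ Set.Icc θlow θhigh, ∀ l ∈ Set.Icc (0 : ℝ) Lbar,
      F θ l ∈ Set.Icc (0 : ℝ) 1)
    (hgF_meas : Measurable fun x : ℝ × ℝ => g x.1 (F x.1 x.2))
    (hgInF_meas : Measurable fun x : ℝ × ℝ => gIn (F x.1 x.2))
    (r : ℝ → ℝ → ℝ) (p : ℝ → ℝ)
    (hr_meas : Measurable (Function.uncurry r)) (hp_meas : Measurable p)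
    (hr_range : ∀ θ ∈ Set.Icc θlow θhigh, ∀ l ∈ Set.Icc (0 : ℝ) Lbar,
      r θ l ∈ Set.Icc (0 : ℝ) 1)
    (q : ℝ → ℝ) (hq_nonneg : ∀ θ, 0 ≤ q θ) (hq_meas : Measurable q)
    (hq_int : (∫ θ in θlow..θhigh, q θ) = 1)
    (D : ℝ → ℝ → ℝ)
    (hD : ∀ l ∈ Set.Icc (0 : ℝ) Lbar, ∀ s ∈ Set.Icc θlow θhigh,
      HasDerivWithinAt (fun t => g t (F t l)) (D s l) (Set.Icc θlow θhigh) s)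
    (hLip : ∃ C : NNReal, ∀ l ∈ Set.Icc (0 : ℝ) Lbar,
      LipschitzOnWith C (fun s => g s (F s l)) (Set.Icc θlow θhigh))
    (hD_meas : Measurable (Function.uncurry D))
    (hD_nonpos : ∀ s ∈ Set.Icc θlow θhigh, ∀ l ∈ Set.Icc (0 : ℝ) Lbar, D s l ≤ 0)
    -- submodularity: `r_θ(l)` is nonincreasing in `θ` for every `l`
    (hsub : ∀ l ∈ Set.Icc (0 : ℝ) Lbar, ∀ θ₁ ∈ Set.Icc θlow θhigh,
      ∀ θ₂ ∈ Set.Icc θlow θhigh, θ₁ ≤ θ₂ → r θ₂ l ≤ r θ₁ l) :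
    ((∀ θ ∈ Set.Icc θlow θhigh, U0 g F Lbar θ ≤ Uag g F Lbar θ (r θ) (p θ)) ∧
        (0 ≤ ∫ θ in θlow..θhigh, Vin gIn F Lbar θ (r θ) (p θ) * q θ) ∧
        (∀ θ ∈ Set.Icc θlow θhigh, ∀ θ' ∈ Set.Icc θlow θhigh,
          Uag g F Lbar θ (r θ') (p θ') ≤ Uag g F Lbar θ (r θ) (p θ))) ↔
      ((∀ θ ∈ Set.Icc θlow θhigh,
          p θ = p θlow + (∫ l in (0 : ℝ)..Lbar, (1 - g θlow (F θlow l)) * r θlow l)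
            - (∫ s in θlow..θ, ∫ l in (0 : ℝ)..Lbar, D s l * r s l)
            - ∫ l in (0 : ℝ)..Lbar, (1 - g θ (F θ l)) * r θ l) ∧
        (p θlow ≤ ∫ l in (0 : ℝ)..Lbar, (1 - g θlow (F θlow l)) * (1 - r θlow l)) ∧
        (0 ≤ ∫ θ in θlow..θhigh, Vin gIn F Lbar θ (r θ) (p θ) * q θ)) :=
  IR_and_IC_characterization_of_submodular_general θlow θhigh Lbar hθ hL g gIn F hg_range hF_range
    hgF_meas r p hr_meas hr_range q D hD hLip hD_meas hD_nonpos hsub
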